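/- arXiv:1608.03353 — 3 statements merged into one kernel-verified Lean document; each statement's English description precedes it below -/
import Mathlib

section
/- Let A be a σ-subnormal subgroup of a finite group G. If A is σ-soluble with σ-nilpotent length l_σ(A) ≤ n, then A ≤ F_{nσ}(G), the n-th term of the upper σ-nilpotent series of G. -/
open Pointwise

section SigmaDefs

variable {ι : Type*}

/-- `σ` is a partition of the set of all primes into pairwise disjoint nonempty sets. -/
def IsPrimePartition (σ : ι → Set ℕ) : Prop :=
  (∀ i, ∀ p ∈ σ i, Nat.Prime p) ∧ (∀ i, (σ i).Nonempty) ∧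
    (∀ i j, i ≠ j → Disjoint (σ i) (σ j)) ∧
    (∀ p : ℕ, Nat.Prime p → ∃ i, p ∈ σ i)

/-- All primes dividing `n` lie in a single class `σ i`. -/
def IsSigmaPrimaryNat (σ : ι → Set ℕ) (n : ℕ) : Prop :=
  ∃ i, ∀ p : ℕ, Nat.Prime p → p ∣ n → p ∈ σ i

/-- A group is `σ`-primary if all primes dividing its order lie in a single class of `σ`. -/
def IsSigmaPrimary (σ : ι → Set ℕ) (G : Type*) [Group G] : Prop :=
  IsSigmaPrimaryNat σ (Nat.card G)

/-- A group is `σ`-nilpotent if it is the (internal) direct product of finitely many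
normal `σ`-primary subgroups. -/
def SigmaNilpotent (σ : ι → Set ℕ) (G : Type*) [Group G] : Prop :=
  ∃ (k : ℕ) (N : Fin k → Subgroup G),
    (∀ t, (N t).Normal) ∧ (∀ t, IsSigmaPrimary σ ↥(N t)) ∧
      (∀ t, Disjoint (N t) (⨆ s, ⨆ _ : s ≠ t, N s)) ∧ (⨆ t, N t) = ⊤

/-- `H/K` is a chief factor of `G`: both are normal in `G`, `K < H`, and no normal
subgroup of `G` lies strictly between them. -/
def IsChiefFactor (G : Type*) [Group G] (K H : Subgroup G) : Prop :=
  K.Normal ∧ H.Normal ∧ K < H ∧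
    ∀ L : Subgroup G, L.Normal → K ≤ L → L ≤ H → L = K ∨ L = H

/-- A group is `σ`-soluble if every chief factor is `σ`-primary
(the order of the factor `H/K` is `K.relindex H`). -/
def SigmaSoluble (σ : ι → Set ℕ) (G : Type*) [Group G] : Prop :=
  ∀ K H : Subgroup G, IsChiefFactor G K H → IsSigmaPrimaryNat σ (K.relIndex H)

/-- `A` is `σ`-subnormal in `G`: there is a chain `A = A₀ ≤ A₁ ≤ ⋯ ≤ A_t = G` such that
each `A_{j}` is normal in `A_{j+1}` or `A_{j+1}/(A_j)_{A_{j+1}}` is `σ`-primary. -/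
def SigmaSubnormal (σ : ι → Set ℕ) {G : Type*} [Group G] (A : Subgroup G) : Prop :=
  ∃ (t : ℕ) (f : Fin (t + 1) → Subgroup G),
    f 0 = A ∧ f (Fin.last t) = ⊤ ∧
      ∀ j : Fin t, f j.castSucc ≤ f j.succ ∧
        (((f j.castSucc).subgroupOf (f j.succ)).Normal ∨
          IsSigmaPrimaryNat σ (((f j.castSucc).subgroupOf (f j.succ)).normalCore.index))

/-- `M` is a maximal subgroup of `K` (inside the ambient group `G`). -/
def MaximalIn {G : Type*} [Group G] (M K : Subgroup G) : Prop :=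
  M < K ∧ ∀ L : Subgroup G, M < L → L ≤ K → L = K

/-- `H` is an `n`-maximal subgroup of `G`:
there is a chain `H = M_n < ⋯ < M_1 < M_0 = G` with each term maximal in the previous one. -/
def IsNMaximal {G : Type*} [Group G] : ℕ → Subgroup G → Prop
  | 0, H => H = ⊤
  | n + 1, H => ∃ K : Subgroup G, IsNMaximal n K ∧ MaximalIn H K

/-- `m_σ(G) = n`: every `n`-maximal subgroup of `G` is `σ`-subnormal in `G`, but
(when `n > 1`) some `(n-1)`-maximal subgroup is not `σ`-subnormal in `G`. -/
def mSigmaEq (σ : ι → Set ℕ) (G : Type*) [Group G] (n : ℕ) : Prop :=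
  (∀ H : Subgroup G, IsNMaximal n H → SigmaSubnormal σ H) ∧
    (1 < n → ∃ H : Subgroup G, IsNMaximal (n - 1) H ∧ ¬ SigmaSubnormal σ H)

/-- `H` is a Hall `σ i`-subgroup of `G`. -/
def IsHallSigmaSubgroup (σ : ι → Set ℕ) (i : ι) {G : Type*} [Group G] (H : Subgroup G) : Prop :=
  (∀ p : ℕ, Nat.Prime p → p ∣ Nat.card ↥H → p ∈ σ i) ∧
    (∀ p : ℕ, Nat.Prime p → p ∣ H.index → p ∉ σ i)

/-- A complete Hall `σ`-set of `G`: every nontrivial member is a Hall `σ i`-subgroup of `G`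
for some `i`, and for every class `σ i` meeting `π(G)` the set contains exactly one
Hall `σ i`-subgroup of `G`. -/
def IsCompleteHallSigmaSet (σ : ι → Set ℕ) {G : Type*} [Group G] (𝓗 : Set (Subgroup G)) : Prop :=
  (∀ H ∈ 𝓗, H ≠ ⊥ → ∃ i, IsHallSigmaSubgroup σ i H) ∧
    (∀ i : ι, (σ i ∩ {p : ℕ | Nat.Prime p ∧ p ∣ Nat.card G}).Nonempty →
      ∃! H : Subgroup G, H ∈ 𝓗 ∧ IsHallSigmaSubgroup σ i H)

/-- Two subgroups permute: `AB = BA` as subsets. -/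
def PermutesWith {G : Type*} [Group G] (A B : Subgroup G) : Prop :=
  (A : Set G) * (B : Set G) = (B : Set G) * (A : Set G)

/-- `H` is `σ`-quasinormal (`σ`-permutable) in `G`: `G` possesses a complete Hall `σ`-set `𝓗`
with `H Aˣ = Aˣ H` for all `A ∈ 𝓗` and all `x ∈ G`. -/
def SigmaQuasinormal (σ : ι → Set ℕ) {G : Type*} [Group G] (H : Subgroup G) : Prop :=
  ∃ 𝓗 : Set (Subgroup G), IsCompleteHallSigmaSet σ 𝓗 ∧
    ∀ A ∈ 𝓗, ∀ x : G, PermutesWith H (A.map (MulAut.conj x).toMonoidHom)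

/-- `m_{σq}(G) = n`: every `n`-maximal subgroup of `G` is `σ`-quasinormal in `G`, but
(when `n > 1`) some `(n-1)`-maximal subgroup is not `σ`-quasinormal in `G`. -/
def mSigmaQEq (σ : ι → Set ℕ) (G : Type*) [Group G] (n : ℕ) : Prop :=
  (∀ H : Subgroup G, IsNMaximal n H → SigmaQuasinormal σ H) ∧
    (1 < n → ∃ H : Subgroup G, IsNMaximal (n - 1) H ∧ ¬ SigmaQuasinormal σ H)

/-- The rank of the (soluble) group `G` is at most `m`: every chief factor of order `p ^ k`
has `k ≤ m`. -/
def RankLE (G : Type*) [Group G] (m : ℕ) : Prop :=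
  ∀ K H : Subgroup G, IsChiefFactor G K H →
    ∀ p k : ℕ, Nat.Prime p → K.relIndex H = p ^ k → k ≤ m

/-- `H` is S-quasinormal (S-permutable) in `G`: `H` permutes with every Sylow subgroup. -/
def SQuasinormal {G : Type*} [Group G] (H : Subgroup G) : Prop :=
  ∀ p : ℕ, Nat.Prime p → ∀ P : Sylow p G, PermutesWith H (P : Subgroup G)

/-- `A` is subnormal in `G`. -/
def IsSubnormalIn {G : Type*} [Group G] (A : Subgroup G) : Prop :=
  ∃ (t : ℕ) (f : Fin (t + 1) → Subgroup G),
    f 0 = A ∧ f (Fin.last t) = ⊤ ∧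
      ∀ j : Fin t, f j.castSucc ≤ f j.succ ∧ ((f j.castSucc).subgroupOf (f j.succ)).Normal

/-- A Schmidt group: not nilpotent, but all proper subgroups are nilpotent. -/
def IsSchmidt (G : Type*) [Group G] : Prop :=
  ¬ Group.IsNilpotent G ∧ ∀ H : Subgroup G, H ≠ ⊤ → Group.IsNilpotent ↥H

/-- A finite group is supersoluble if every chief factor has prime order. -/
def IsSupersoluble (G : Type*) [Group G] : Prop :=
  ∀ K H : Subgroup G, IsChiefFactor G K H → Nat.Prime (K.relIndex H)

/-- `l_σ(G) ≤ n`: `G` has a normal series of length `n` with `σ`-nilpotent factors. -/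
def SigmaNilpotentLengthLE (σ : ι → Set ℕ) (G : Type*) [Group G] (n : ℕ) : Prop :=
  ∃ f : Fin (n + 1) → Subgroup G,
    Monotone f ∧ f 0 = ⊥ ∧ f (Fin.last n) = ⊤ ∧ (∀ j, (f j).Normal) ∧
      ∀ (j : Fin n), ∀ [inst : (f j.castSucc).Normal],
        SigmaNilpotent σ ↥((f j.succ).map (QuotientGroup.mk' (f j.castSucc)))

/-- The `σ`-Fitting subgroup of `G`: the product (join) of all normal `σ`-nilpotent
subgroups of `G`. -/
def sigmaFitting (σ : ι → Set ℕ) (G : Type*) [Group G] : Subgroup G :=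
  ⨆ N ∈ {N : Subgroup G | N.Normal ∧ SigmaNilpotent σ ↥N}, N

/-- `F` is the `n`-th term `F_{nσ}(G)` of the upper `σ`-nilpotent series of `G`:
`F_{0σ}(G) = 1` and `F_{nσ}(G)/F_{(n-1)σ}(G) = F_σ(G/F_{(n-1)σ}(G))`. -/
def IsUpperSigmaNilpotentSeriesTerm (σ : ι → Set ℕ) (G : Type*) [Group G] :
    ℕ → Subgroup G → Prop
  | 0, F => F = ⊥
  | n + 1, F => ∃ F' : Subgroup G, IsUpperSigmaNilpotentSeriesTerm σ G n F' ∧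
      ∀ [inst : F'.Normal],
        F = Subgroup.comap (QuotientGroup.mk' F') (sigmaFitting σ (G ⧸ F'))

/-- `O_π(G)`: the largest normal subgroup of `G` whose order is a `π`-number
(here realised as the join of all normal `π`-subgroups). -/
def OPi (π : Set ℕ) (G : Type*) [Group G] : Subgroup G :=
  ⨆ N ∈ {N : Subgroup G | N.Normal ∧ ∀ p : ℕ, Nat.Prime p → p ∣ Nat.card ↥N → p ∈ π}, N

/-- `G` is `π`-closed: `O_π(G)` is a Hall `π`-subgroup of `G`, i.e. no prime in `π`
divides its index. -/
def PiClosed (π : Set ℕ) (G : Type*) [Group G] : Prop :=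
  ∀ p : ℕ, Nat.Prime p → p ∣ (OPi π G).index → p ∉ π

/-- The set of primes belonging to the classes of `σ` indexed by `S` (i.e. `∪ Π`). -/
def PiPrimes (σ : ι → Set ℕ) (S : Set ι) : Set ℕ := ⋃ i ∈ S, σ i

/-- `n` and `m` are `σ`-coprime: `σ(n) ∩ σ(m) = ∅`. -/
def SigmaCoprime (σ : ι → Set ℕ) (n m : ℕ) : Prop :=
  ∀ i : ι, ∀ p q : ℕ, Nat.Prime p → Nat.Prime q → p ∣ n → q ∣ m →
    p ∈ σ i → q ∈ σ i → False

/-- `D` is the `σ`-nilpotent residual `G^{𝔑_σ}` of `G`: the smallest normal subgroup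
with `σ`-nilpotent quotient. -/
def IsSigmaNilpotentResidual (σ : ι → Set ℕ) {G : Type*} [Group G] (D : Subgroup G) : Prop :=
  D.Normal ∧
    (∀ [inst : D.Normal], SigmaNilpotent σ (G ⧸ D)) ∧
    (∀ (N : Subgroup G) [inst : N.Normal], SigmaNilpotent σ (G ⧸ N) → D ≤ N)

/-- The chief factor `H/K` is `σ`-central in `G`: the semidirect product
`(H/K) ⋊ (G/C_G(H/K))` is `σ`-primary; since `σ`-primarity depends only on the order,
this is expressed via `|H/K| * |G/C_G(H/K)|`. -/
def SigmaCentralFactor (σ : ι → Set ℕ) {G : Type*} [Group G] (K H : Subgroup G)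
    [K.Normal] : Prop :=
  IsSigmaPrimaryNat σ
    (Nat.card ↥(H.map (QuotientGroup.mk' K)) *
      (Subgroup.centralizer ((H.map (QuotientGroup.mk' K) : Subgroup (G ⧸ K)) : Set (G ⧸ K))).index)

/-- `σ(G)`: the set of classes of `σ` meeting `π(G)`. -/
def sigmaOf (σ : ι → Set ℕ) (G : Type*) [Group G] : Set ι :=
  {i : ι | (σ i ∩ {p : ℕ | Nat.Prime p ∧ p ∣ Nat.card G}).Nonempty}

end SigmaDefs

/-!
A σ-subnormal σᵢ-subgroup lies in `O_{σᵢ}(G)`, because `O_{σᵢ}` grows along a σ-subnormal chain.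
For one step `M ≤ G` this says: a σᵢ-subgroup `Q ≤ M` normalized by `M` lies in `O_{σᵢ}(G)`
whenever `M` is normal or `G/C` is a σₖ-group, `C` the core of `M`. If `M` is normal or `k ≠ i`,
then `Q` is a normal σᵢ-subgroup of a normal subgroup of `G`. If `k = i`, factor out `O_{σᵢ}(G)`;
then `Q ∩ C = 1`, so `Q` centralizes `C`, and by Schur–Zassenhaus the centralizer of `C` splits
over its central σᵢ'-subgroup `C ∩ C_G(C)`; the complement is a σᵢ-group that is normal in `G`
and contains `Q`.

Consequently a σ-subnormal image of a σ-nilpotent group, generated by σ-subnormal σ-primary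
subgroups, lies in `F_σ(G)`, and induction along a σ-nilpotent series of `A`, whose terms are
normal in `A` and hence σ-subnormal in `G`, puts its `j`-th term into `F_{jσ}(G)`.
-/

open Function Subgroup

def IsPiNat (π : Set ℕ) (n : ℕ) : Prop :=
  ∀ p : ℕ, p.Prime → p ∣ n → p ∈ π

section PiNumbers

variable {π : Set ℕ} {m n : ℕ}

theorem IsPiNat.of_dvd (h : m ∣ n) (hn : IsPiNat π n) : IsPiNat π m :=
  fun p hp hpm => hn p hp (hpm.trans h)

theorem IsPiNat.mul (hm : IsPiNat π m) (hn : IsPiNat π n) : IsPiNat π (m * n) :=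
  fun p hp hpmn => (hp.dvd_mul.mp hpmn).elim (hm p hp) (hn p hp)

theorem isPiNat_one : IsPiNat π 1 :=
  fun _ hp hp1 => absurd (Nat.dvd_one.mp hp1) hp.ne_one

theorem IsPiNat.coprime_of_compl (hm : IsPiNat π m) (hn : IsPiNat πᶜ n) : m.Coprime n :=
  Nat.coprime_of_dvd fun p hp hpm hpn => hn p hp hpn (hm p hp hpm)

end PiNumbers

section Subgroups

variable {G : Type*} [Group G]

theorem Subgroup.card_eq_card_mul_relIndex {H K : Subgroup G} (h : H ≤ K) :
    Nat.card K = Nat.card H * H.relIndex K := by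
  rw [← relIndex_bot_left, ← relIndex_bot_left, relIndex_mul_relIndex ⊥ H K bot_le h]

theorem Subgroup.card_sup_dvd_of_normal (H K : Subgroup G) [K.Normal] :
    Nat.card ↥(H ⊔ K) ∣ Nat.card H * Nat.card K := by
  rw [card_eq_card_mul_relIndex (le_sup_right : K ≤ H ⊔ K), relIndex_sup_right, mul_comm]
  exact Nat.mul_dvd_mul_right (relIndex_dvd_card K H) _

theorem Subgroup.card_subgroupOf_of_le {H K : Subgroup G} (h : H ≤ K) :
    Nat.card (H.subgroupOf K) = Nat.card H :=
  Nat.card_congr (subgroupOfEquivOfLe h).toEquiv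

theorem Subgroup.le_of_isPiNat_card_of_isPiNat_index {π π' : Set ℕ} (hππ' : Disjoint π π')
    {Q N : Subgroup G} [N.Normal] (hQ : IsPiNat π (Nat.card Q)) (hN : IsPiNat π' N.index) :
    Q ≤ N := by
  have hcard : Nat.card (Q.map (QuotientGroup.mk' N)) = 1 := by
    by_contra hne
    obtain ⟨p, hp, hpQ⟩ := Nat.exists_prime_and_dvd hne
    exact Set.disjoint_left.mp hππ' (hQ p hp (hpQ.trans (card_map_dvd _ _)))
      (hN p hp (hpQ.trans (card_subgroup_dvd_card _)))
  rw [← QuotientGroup.ker_mk' N, ← Subgroup.map_eq_bot_iff]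
  exact card_eq_one.mp hcard

theorem Subgroup.index_normalCore_map_dvd {G' : Type*} [Group G'] {f : G →* G'}
    (hf : Function.Surjective f) (H : Subgroup G) :
    (H.map f).normalCore.index ∣ H.normalCore.index := by
  have : (H.normalCore.map f).Normal := (normalCore_normal H).map f hf
  have hle : H.normalCore.map f ≤ (H.map f).normalCore :=
    normal_le_normalCore.mpr (map_mono (normalCore_le H))
  exact (index_dvd_of_le hle).trans (index_map_dvd _ hf)

theorem Subgroup.normal_of_le_center {Z : Subgroup G} (hZ : Z ≤ center G) : Z.Normal :=
  ⟨fun z hz g => by rw [mem_center_iff.mp (hZ hz) g, mul_inv_cancel_right]; exact hz⟩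

theorem Subgroup.exists_card_eq_index_forall_coprime_mem {Z : Subgroup G} (hZ : Z ≤ center G)
    (hcop : (Nat.card Z).Coprime Z.index) :
    ∃ K : Subgroup G, Nat.card K = Z.index ∧
      ∀ x : G, (orderOf x).Coprime (Nat.card Z) → x ∈ K := by
  have := normal_of_le_center hZ
  obtain ⟨K, hK⟩ := exists_right_complement'_of_coprime hcop
  refine ⟨K, hK.symm.index_eq_card.symm, fun x hx => ?_⟩
  obtain ⟨⟨z, k⟩, rfl, -⟩ := hK.existsUnique x
  set m := orderOf ((z : G) * k)
  have hzk : Commute (z : G) k := (mem_center_iff.mp (hZ z.2) k).symm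
  have hz : (z : G) ^ m = 1 := by
    have hpow : (z : G) ^ m * (k : G) ^ m = 1 := by
      rw [← hzk.mul_pow, pow_orderOf_eq_one]
    have hmem : (z : G) ^ m ∈ Z ⊓ K :=
      mem_inf.mpr ⟨pow_mem z.2 _, eq_inv_of_mul_eq_one_left hpow ▸ inv_mem (pow_mem k.2 _)⟩
    rwa [hK.disjoint.eq_bot, mem_bot] at hmem
  have hz1 : orderOf (z : G) = 1 :=
    Nat.eq_one_of_dvd_coprimes hx (orderOf_dvd_of_pow_eq_one hz)
      (Subgroup.orderOf_dvd_natCard Z z.2)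
  rw [orderOf_eq_one_iff.mp hz1, one_mul]
  exact k.2

theorem Subgroup.le_centralizer_of_le_normalizer_of_inf_eq_bot {Q C : Subgroup G} [C.Normal]
    (hCQ : C ≤ normalizer (Q : Set G)) (hQC : Q ⊓ C = ⊥) : Q ≤ centralizer (C : Set G) := by
  intro q hq c hc
  have hQ : q * (c * q⁻¹ * c⁻¹) ∈ Q := mul_mem hq ((hCQ hc q⁻¹).mp (inv_mem hq))
  have hC : q * c * q⁻¹ * c⁻¹ ∈ C := mul_mem (Normal.conj_mem ‹_› c hc q) (inv_mem hc)
  have h1 : q * c * q⁻¹ * c⁻¹ = 1 := by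
    rw [← mem_bot, ← hQC]
    exact mem_inf.mpr ⟨by simpa only [mul_assoc] using hQ, hC⟩
  calc c * q = (q * c * q⁻¹ * c⁻¹)⁻¹ * (q * c) := by group
    _ = q * c := by rw [h1, inv_one, one_mul]

end Subgroups

section PiRadical

variable {G : Type*} [Group G] {π : Set ℕ}

theorem OPi_eq_sSup :
    OPi π G = sSup {N : Subgroup G | N.Normal ∧ IsPiNat π (Nat.card N)} := by
  rw [sSup_eq_iSup]; rfl

theorem le_OPi {N : Subgroup G} [hN : N.Normal] (hπ : IsPiNat π (Nat.card N)) : N ≤ OPi π G :=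
  OPi_eq_sSup (G := G) ▸ le_sSup ⟨hN, hπ⟩

theorem normal_OPi_and_isPiNat_card [Finite G] :
    (OPi π G).Normal ∧ IsPiNat π (Nat.card (OPi π G)) := by
  let S := {N : Subgroup G | N.Normal ∧ IsPiNat π (Nat.card N)}
  have hS : SupClosed S := by
    rintro N ⟨hN, hNπ⟩ K ⟨hK, hKπ⟩
    exact ⟨sup_normal N K, (hNπ.mul hKπ).of_dvd (card_sup_dvd_of_normal N K)⟩
  rw [OPi_eq_sSup]
  exact hS.sSup_mem S.toFinite ⟨inferInstance, (card_bot (G := G)).symm ▸ isPiNat_one⟩ le_rfl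

instance OPi.normal [Finite G] : (OPi π G).Normal :=
  normal_OPi_and_isPiNat_card.1

theorem isPiNat_card_OPi [Finite G] : IsPiNat π (Nat.card (OPi π G)) :=
  normal_OPi_and_isPiNat_card.2

theorem map_OPi_le {G' : Type*} [Group G'] {f : G →* G'} (hf : Function.Surjective f) :
    (OPi π G).map f ≤ OPi π G' := by
  rw [OPi_eq_sSup, sSup_eq_iSup, Subgroup.map_iSup]
  refine iSup_le fun N => ?_
  rw [Subgroup.map_iSup]
  refine iSup_le fun ⟨hN, hNπ⟩ => ?_
  have := hN.map f hf
  exact le_OPi (hNπ.of_dvd (card_map_dvd N f))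

instance OPi.characteristic : (OPi π G).Characteristic :=
  characteristic_iff_map_le.mpr fun ϕ => map_OPi_le ϕ.surjective

theorem map_subtype_OPi_le [Finite G] (C : Subgroup G) [C.Normal] :
    (OPi π C).map C.subtype ≤ OPi π G :=
  le_OPi (isPiNat_card_OPi.of_dvd (card_map_dvd _ _))

theorem map_subtype_le_OPi_of_forall_mem {L : Subgroup G} [L.Normal] {K : Subgroup L}
    (hKπ : IsPiNat π (Nat.card K)) (hK : ∀ x : L, IsPiNat π (orderOf x) → x ∈ K) :
    K.map L.subtype ≤ OPi π G := by
  have : (K.map L.subtype).Normal := by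
    refine ⟨fun x hx g => ?_⟩
    obtain ⟨k, hk, rfl⟩ := mem_map.mp hx
    refine ⟨⟨g * k * g⁻¹, Normal.conj_mem inferInstance _ k.2 g⟩, hK _ ?_, rfl⟩
    rw [orderOf_mk, ← MulAut.conj_apply, MulEquiv.orderOf_eq, orderOf_coe]
    exact hKπ.of_dvd (Subgroup.orderOf_dvd_natCard _ hk)
  exact le_OPi (hKπ.of_dvd (card_map_dvd _ _))

theorem le_OPi_of_le_normalizer [Finite G] {Q C : Subgroup G} [C.Normal] (hQC : Q ≤ C)
    (hCQ : C ≤ normalizer (Q : Set G)) (hQ : IsPiNat π (Nat.card Q)) : Q ≤ OPi π G := by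
  have : (Q.subgroupOf C).Normal := (normal_subgroupOf_iff_le_normalizer hQC).mpr hCQ
  have hQO : Q.subgroupOf C ≤ OPi π C := le_OPi (by rwa [card_subgroupOf_of_le hQC])
  calc Q = (Q.subgroupOf C).map C.subtype := (map_subgroupOf_eq_of_le hQC).symm
    _ ≤ (OPi π C).map C.subtype := map_mono hQO
    _ ≤ OPi π G := map_subtype_OPi_le C

theorem comap_OPi_quotient_le [Finite G] (N : Subgroup G) [N.Normal]
    (hN : IsPiNat π (Nat.card N)) : (OPi π (G ⧸ N)).comap (QuotientGroup.mk' N) ≤ OPi π G := by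
  set W := (OPi π (G ⧸ N)).comap (QuotientGroup.mk' N)
  have hNW : N ≤ W := by
    rw [← QuotientGroup.ker_mk' N]
    exact MonoidHom.ker_le_comap _ _
  have hW : Nat.card W = Nat.card N * Nat.card (OPi π (G ⧸ N)) := by
    have h := relIndex_ker W (QuotientGroup.mk' N)
    rw [QuotientGroup.ker_mk',
      map_comap_eq_self_of_surjective (QuotientGroup.mk'_surjective N)] at h
    rw [card_eq_card_mul_relIndex hNW, h]
  exact le_OPi (hW ▸ hN.mul isPiNat_card_OPi)

theorem OPi_quotient_OPi_eq_bot [Finite G] : OPi π (G ⧸ OPi π G) = ⊥ := by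
  rw [eq_bot_iff, ← map_comap_eq_self_of_surjective (QuotientGroup.mk'_surjective (OPi π G))
    (OPi π (G ⧸ OPi π G)), Subgroup.map_le_iff_le_comap, MonoidHom.comap_bot,
    QuotientGroup.ker_mk']
  exact comap_OPi_quotient_le _ isPiNat_card_OPi

end PiRadical

section PiRadicalTrivial

variable {G : Type*} [Group G] [Finite G] {π : Set ℕ}

theorem isPiNat_compl_card_of_OPi_eq_bot (hO : OPi π G = ⊥) (Z : Subgroup G) [Z.Normal]
    [IsMulCommutative Z] : IsPiNat πᶜ (Nat.card Z) := by
  intro p hp hpZ hpπ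
  have := Fact.mk hp
  obtain ⟨P⟩ : Nonempty (Sylow p Z) := inferInstance
  have := P.characteristic_of_normal (normal_of_isMulCommutative _)
  obtain ⟨k, hk⟩ := IsPGroup.iff_card.mp P.isPGroup'
  have hPπ : IsPiNat π (Nat.card ((P : Subgroup Z).map Z.subtype)) := by
    rw [card_map_of_injective Z.subtype_injective, hk]
    intro q hq hqp
    rwa [(Nat.prime_dvd_prime_iff_eq hq hp).mp (hq.dvd_of_dvd_pow hqp)]
  have hbot : (P : Subgroup Z).map Z.subtype = ⊥ := le_bot_iff.mp (hO ▸ le_OPi hPπ)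
  exact P.ne_bot_of_dvd_card hpZ ((map_eq_bot_iff_of_injective _ Z.subtype_injective).mp hbot)

theorem eq_bot_of_le_normalizer_of_isPiNat_index (hO : OPi π G = ⊥) {C Q : Subgroup G}
    [C.Normal] (hC : IsPiNat π C.index) (hCQ : C ≤ normalizer (Q : Set G))
    (hQ : IsPiNat π (Nat.card Q)) : Q = ⊥ := by
  have hQC : Q ⊓ C = ⊥ := by
    refine le_bot_iff.mp (hO ▸ le_OPi_of_le_normalizer inf_le_right ?_
      (hQ.of_dvd (card_dvd_of_le inf_le_left)))
    exact (le_inf hCQ le_normalizer_of_normal).trans inf_normalizer_le_normalizer_inf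
  have hQL := le_centralizer_of_le_normalizer_of_inf_eq_bot hCQ hQC
  set L := centralizer (C : Set G)
  have hZcard : IsPiNat πᶜ (Nat.card (C.subgroupOf L)) := by
    have : IsMulCommutative ↥(C ⊓ L) :=
      le_centralizer_iff_isMulCommutative.mp fun a ha b hb => (hb.2 a ha.1).symm
    rw [← inf_subgroupOf_right, card_subgroupOf_of_le inf_le_right]
    exact isPiNat_compl_card_of_OPi_eq_bot hO _
  set Z := C.subgroupOf L
  have hZ : Z ≤ center L := fun z hz => mem_center_iff.mpr fun x => Subtype.ext (x.2 _ hz).symm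
  have hZind : IsPiNat π Z.index := hC.of_dvd (relIndex_dvd_index_of_normal C L)
  obtain ⟨K, hKcard, hKmem⟩ :=
    exists_card_eq_index_forall_coprime_mem hZ (hZind.coprime_of_compl hZcard).symm
  have hK : ∀ x : L, IsPiNat π (orderOf x) → x ∈ K :=
    fun x hx => hKmem x (hx.coprime_of_compl hZcard)
  have hKbot : K.map L.subtype = ⊥ :=
    le_bot_iff.mp (hO ▸ map_subtype_le_OPi_of_forall_mem (hKcard ▸ hZind) hK)
  refine le_bot_iff.mp fun q hq => hKbot ▸ mem_map.mpr ⟨⟨q, hQL hq⟩, hK _ ?_, rfl⟩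
  rw [orderOf_mk]
  exact hQ.of_dvd (Subgroup.orderOf_dvd_natCard _ hq)

theorem le_OPi_of_le_normalizer_of_isPiNat_index {C Q : Subgroup G} [C.Normal]
    (hC : IsPiNat π C.index) (hCQ : C ≤ normalizer (Q : Set G)) (hQ : IsPiNat π (Nat.card Q)) :
    Q ≤ OPi π G := by
  let φ := QuotientGroup.mk' (OPi π G)
  have hφ : Function.Surjective φ := QuotientGroup.mk'_surjective _
  have : (C.map φ).Normal := Normal.map ‹_› φ hφ
  have hQbar : Q.map φ = ⊥ :=
    eq_bot_of_le_normalizer_of_isPiNat_index OPi_quotient_OPi_eq_bot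
      (hC.of_dvd (index_map_dvd C hφ)) ((map_mono hCQ).trans (le_normalizer_map φ))
      (hQ.of_dvd (card_map_dvd Q φ))
  rwa [Subgroup.map_eq_bot_iff, QuotientGroup.ker_mk'] at hQbar

end PiRadicalTrivial

section SigmaSubnormal

variable {ι : Type*} {σ : ι → Set ℕ} {G : Type*} [Group G]

theorem Subgroup.range_le_normalizer_map {G' : Type*} [Group G'] (f : G →* G') (N : Subgroup G)
    [N.Normal] : f.range ≤ normalizer (N.map f : Set G') := by
  simpa only [normalizer_eq_top, ← MonoidHom.range_eq_map] using le_normalizer_map (H := N) f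

theorem Subgroup.map_subgroupOf_map {G' : Type*} [Group G'] (f : G →* G') {A B : Subgroup G}
    (hAB : A ≤ B) : (A.map f).subgroupOf (B.map f) = (A.subgroupOf B).map (f.subgroupMap B) := by
  ext ⟨y, hy⟩
  simp only [mem_subgroupOf, mem_map]
  constructor
  · rintro ⟨x, hx, rfl⟩
    exact ⟨⟨x, hAB hx⟩, hx, rfl⟩
  · rintro ⟨x, hx, hxy⟩
    exact ⟨x, hx, congrArg Subtype.val hxy⟩

theorem SigmaSubnormal.map {G' : Type*} [Group G'] {f : G →* G'} (hf : Function.Surjective f)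
    {A : Subgroup G} (hA : SigmaSubnormal σ A) : SigmaSubnormal σ (A.map f) := by
  obtain ⟨t, c, rfl, htop, hstep⟩ := hA
  refine ⟨t, fun j => (c j).map f, rfl, ?_, fun j => ⟨map_mono (hstep j).1, ?_⟩⟩
  · show (c (Fin.last t)).map f = ⊤
    rw [htop, ← MonoidHom.range_eq_map, MonoidHom.range_eq_top.mpr hf]
  have hsurj := f.subgroupMap_surjective (c j.succ)
  rw [map_subgroupOf_map f (hstep j).1]
  exact (hstep j).2.imp (fun h => h.map _ hsurj)
    fun ⟨k, hk⟩ => ⟨k, IsPiNat.of_dvd (index_normalCore_map_dvd hsurj _) hk⟩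

theorem SigmaSubnormal.of_le_normalizer {A B : Subgroup G} (hB : SigmaSubnormal σ B)
    (hAB : A ≤ B) (hBA : B ≤ normalizer (A : Set G)) : SigmaSubnormal σ A := by
  obtain ⟨t, c, rfl, htop, hstep⟩ := hB
  refine ⟨t + 1, Fin.cons A c, rfl, htop, Fin.cases ?_ fun j => ?_⟩
  · exact ⟨hAB, Or.inl ((normal_subgroupOf_iff_le_normalizer hAB).mpr hBA)⟩
  · exact hstep j

theorem le_OPi_of_sigmaSubnormal_step [Finite G] (hσ : Pairwise (Disjoint on σ)) {i : ι}
    {Q M : Subgroup G} (hQM : Q ≤ M) (hMQ : M ≤ normalizer (Q : Set G))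
    (hQ : IsPiNat (σ i) (Nat.card Q))
    (hM : M.Normal ∨ IsSigmaPrimaryNat σ M.normalCore.index) : Q ≤ OPi (σ i) G := by
  rcases hM with hM | ⟨k, hk⟩
  · exact le_OPi_of_le_normalizer hQM hMQ hQ
  have hCQ : M.normalCore ≤ normalizer (Q : Set G) := (normalCore_le M).trans hMQ
  obtain rfl | hik := eq_or_ne i k
  · exact le_OPi_of_le_normalizer_of_isPiNat_index hk hCQ hQ
  · exact le_OPi_of_le_normalizer (le_of_isPiNat_card_of_isPiNat_index (hσ hik) hQ hk) hCQ hQ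

theorem map_subtype_OPi_le_of_sigmaSubnormal_step [Finite G] (hσ : Pairwise (Disjoint on σ))
    {i : ι} {A B : Subgroup G} (hAB : A ≤ B)
    (hstep : (A.subgroupOf B).Normal ∨ IsSigmaPrimaryNat σ (A.subgroupOf B).normalCore.index) :
    (OPi (σ i) A).map A.subtype ≤ (OPi (σ i) B).map B.subtype := by
  set O := (OPi (σ i) A).map A.subtype
  have hOA : O ≤ A := map_subtype_le _
  have hAO : A ≤ normalizer (O : Set G) := by
    simpa only [range_subtype] using range_le_normalizer_map A.subtype (OPi (σ i) A)
  have hO : O.subgroupOf B ≤ OPi (σ i) B := by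
    refine le_OPi_of_sigmaSubnormal_step hσ (comap_mono hOA)
      ((comap_mono hAO).trans (le_normalizer_comap _)) ?_ hstep
    rw [card_subgroupOf_of_le (hOA.trans hAB)]
    exact isPiNat_card_OPi.of_dvd (card_map_dvd _ _)
  calc O = (O.subgroupOf B).map B.subtype := (map_subgroupOf_eq_of_le (hOA.trans hAB)).symm
    _ ≤ (OPi (σ i) B).map B.subtype := map_mono hO

theorem SigmaSubnormal.le_OPi_of_isPiNat_card [Finite G] (hσ : Pairwise (Disjoint on σ)) {i : ι}
    {A : Subgroup G} (hA : SigmaSubnormal σ A) (hAπ : IsPiNat (σ i) (Nat.card A)) :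
    A ≤ OPi (σ i) G := by
  obtain ⟨t, f, rfl, htop, hstep⟩ := hA
  have hchain : ∀ j, f 0 ≤ (OPi (σ i) (f j)).map (f j).subtype := by
    intro j
    induction j using Fin.induction with
    | zero =>
      have hO : OPi (σ i) (f 0) = ⊤ := top_le_iff.mp (le_OPi (by rwa [card_top]))
      rw [hO, ← MonoidHom.range_eq_map, range_subtype]
    | succ j ih =>
      exact ih.trans (map_subtype_OPi_le_of_sigmaSubnormal_step hσ (hstep j).1 (hstep j).2)
  have : (f (Fin.last t)).Normal := by rw [htop]; infer_instance
  exact (hchain _).trans (map_subtype_OPi_le (f (Fin.last t)))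

end SigmaSubnormal

section SigmaFitting

variable {ι : Type*} {σ : ι → Set ℕ} {G : Type*} [Group G]

theorem sigmaNilpotent_of_isSigmaPrimary (h : IsSigmaPrimary σ G) : SigmaNilpotent σ G := by
  refine ⟨1, fun _ => ⊤, fun _ => inferInstance, fun _ => ?_, fun t => ?_, iSup_const⟩
  · rwa [IsSigmaPrimary, card_top]
  · simp [Subsingleton.elim _ t]

instance sigmaFitting.normal : (sigmaFitting σ G).Normal := by
  rw [sigmaFitting, ← sSup_eq_iSup]
  exact sSup_normal _ fun N hN => hN.1

theorem OPi_le_sigmaFitting [Finite G] (i : ι) : OPi (σ i) G ≤ sigmaFitting σ G :=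
  le_iSup₂_of_le (OPi (σ i) G)
    ⟨inferInstance, sigmaNilpotent_of_isSigmaPrimary ⟨i, isPiNat_card_OPi⟩⟩ le_rfl

theorem SigmaSubnormal.range_le_sigmaFitting [Finite G] (hσ : Pairwise (Disjoint on σ))
    {Y : Type*} [Group Y] (hY : SigmaNilpotent σ Y) {ψ : Y →* G}
    (hψ : SigmaSubnormal σ ψ.range) : ψ.range ≤ sigmaFitting σ G := by
  obtain ⟨k, N, hN, hprim, -, htop⟩ := hY
  rw [MonoidHom.range_eq_map, ← htop, Subgroup.map_iSup]
  refine iSup_le fun t => ?_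
  obtain ⟨i, hi⟩ := hprim t
  have hsn : SigmaSubnormal σ ((N t).map ψ) :=
    hψ.of_le_normalizer (map_le_range ψ _) (range_le_normalizer_map ψ (N t))
  exact (hsn.le_OPi_of_isPiNat_card hσ (IsPiNat.of_dvd (card_map_dvd _ _) hi)).trans
    (OPi_le_sigmaFitting i)

theorem map_le_comap_sigmaFitting [Finite G] (hσ : Pairwise (Disjoint on σ)) {H : Type*}
    [Group H] (φ : H →* G) {K L : Subgroup H} [K.Normal] (hL : SigmaSubnormal σ (L.map φ))
    (hLK : SigmaNilpotent σ (L.map (QuotientGroup.mk' K))) {F : Subgroup G} [F.Normal]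
    (hKF : K.map φ ≤ F) : L.map φ ≤ (sigmaFitting σ (G ⧸ F)).comap (QuotientGroup.mk' F) := by
  let χ : H ⧸ K →* G ⧸ F := QuotientGroup.lift K ((QuotientGroup.mk' F).comp φ)
    fun k hk => (QuotientGroup.eq_one_iff _).mpr (hKF (mem_map_of_mem φ hk))
  have hrange : (χ.comp (L.map (QuotientGroup.mk' K)).subtype).range =
      (L.map φ).map (QuotientGroup.mk' F) := by
    rw [MonoidHom.range_comp, range_subtype, map_map, map_map]
    rfl
  rw [← map_le_iff_le_comap, ← hrange]
  exact SigmaSubnormal.range_le_sigmaFitting hσ hLK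
    (hrange ▸ hL.map (QuotientGroup.mk'_surjective F))

theorem IsUpperSigmaNilpotentSeriesTerm.normal {n : ℕ} {F : Subgroup G}
    (hF : IsUpperSigmaNilpotentSeriesTerm σ G n F) : F.Normal := by
  induction n generalizing F with
  | zero =>
    rw [show F = ⊥ from hF]
    infer_instance
  | succ n ih =>
    obtain ⟨F', hF', hF⟩ := hF
    have := ih hF'
    rw [hF]
    exact sigmaFitting.normal.comap _

theorem SigmaSubnormal.map_subtype_le_of_isUpperSigmaNilpotentSeriesTerm [Finite G]
    (hσ : Pairwise (Disjoint on σ)) {A : Subgroup G} (hA : SigmaSubnormal σ A) {n : ℕ}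
    {f : Fin (n + 1) → Subgroup A} (h0 : f 0 = ⊥) (hnorm : ∀ j, (f j).Normal)
    (hfac : ∀ (j : Fin n) [(f j.castSucc).Normal],
      SigmaNilpotent σ ((f j.succ).map (QuotientGroup.mk' (f j.castSucc))))
    (j : Fin (n + 1)) {F : Subgroup G} (hF : IsUpperSigmaNilpotentSeriesTerm σ G j F) :
    (f j).map A.subtype ≤ F := by
  induction j using Fin.induction generalizing F with
  | zero =>
    rw [h0, Subgroup.map_bot]
    exact bot_le
  | succ j ih =>
    obtain ⟨F', hF', hF⟩ := hF
    have := hF'.normal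
    have := hnorm j.castSucc
    have hsn : SigmaSubnormal σ ((f j.succ).map A.subtype) := by
      have := hnorm j.succ
      refine hA.of_le_normalizer (map_subtype_le _) ?_
      simpa only [range_subtype] using range_le_normalizer_map A.subtype (f j.succ)
    rw [hF]
    exact map_le_comap_sigmaFitting hσ A.subtype hsn (hfac j) (ih hF')

end SigmaFitting

theorem sigmaSubnormal_le_upperSigmaSeries_general {ι : Type*} (σ : ι → Set ℕ)
    (hσ : IsPrimePartition σ) (G : Type*) [Group G] [Finite G]
    (A : Subgroup G) (hA : SigmaSubnormal σ A)
    (n : ℕ) (hl : SigmaNilpotentLengthLE σ ↥A n)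
    (F : Subgroup G) (hF : IsUpperSigmaNilpotentSeriesTerm σ G n F) :
    A ≤ F := by
  obtain ⟨f, -, h0, htop, hnorm, hfac⟩ := hl
  have h := hA.map_subtype_le_of_isUpperSigmaNilpotentSeriesTerm hσ.2.2.1 h0 hnorm hfac
    (Fin.last n) hF
  rwa [htop, ← MonoidHom.range_eq_map, range_subtype] at h

/-- If `A` is a `σ`-subnormal subgroup of a finite group `G`, `A` is
`σ`-soluble with `l_σ(A) ≤ n`, then `A ≤ F_{nσ}(G)`. -/
theorem sigmaSubnormal_le_upperSigmaSeries {ι : Type*} (σ : ι → Set ℕ)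
    (hσ : IsPrimePartition σ) (G : Type*) [Group G] [Finite G]
    (A : Subgroup G) (hA : SigmaSubnormal σ A)
    (hsol : SigmaSoluble σ ↥A) (n : ℕ) (hl : SigmaNilpotentLengthLE σ ↥A n)
    (F : Subgroup G) (hF : IsUpperSigmaNilpotentSeriesTerm σ G n F) :
    A ≤ F :=
  sigmaSubnormal_le_upperSigmaSeries_general σ hσ G A hA n hl F hF
end

section
/- Let A be a σ-subnormal subgroup of a finite group G. If A is σ-perfect, i.e., A coincides with its σ-nilpotent residual A^{𝔑_σ}, then A is subnormal in G. -/
open Pointwise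

/-!
Walk up the `σ`-subnormal chain `A = A₀ ≤ ⋯ ≤ Aₜ = G`, keeping `A` subnormal in `Aᵢ`. A normal
step is harmless. In a `σ`-primary step, `Aᵢ₊₁ / (Aᵢ)_{Aᵢ₊₁}` is `σ`-primary, so the image of `A`
in it is a `σ`-nilpotent quotient of `A`, hence trivial: `A` lies in the core `(Aᵢ)_{Aᵢ₊₁}`, which
is normal in `Aᵢ₊₁` and contained in `Aᵢ`.
-/

/-- `P^{𝔑_σ} = P`. -/
def SigmaPerfect {ι : Type*} (σ : ι → Set ℕ) (P : Type*) [Group P] : Prop :=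
  ∀ (N : Subgroup P) [N.Normal], SigmaNilpotent σ (P ⧸ N) → N = ⊤

namespace Subgroup

variable {G : Type*} [Group G]

theorem subgroupOf_subgroupOf_eq_comap {A H K : Subgroup G} (hHK : H ≤ K) :
    (A.subgroupOf K).subgroupOf (H.subgroupOf K) =
      (A.subgroupOf H).comap (subgroupOfEquivOfLe hHK).toMonoidHom :=
  rfl

theorem IsSubnormal.of_subgroupOf_of_le_normal {B N H : Subgroup G} [N.Normal] (hBN : B ≤ N)
    (hNH : N ≤ H) (hB : (B.subgroupOf H).IsSubnormal) : B.IsSubnormal :=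
  hB.comap (inclusion hNH) |>.trans hBN <| Normal.isSubnormal inferInstance

theorem IsSubnormal.isSubnormalIn {H : Subgroup G} (h : H.IsSubnormal) : IsSubnormalIn H := by
  induction h with
  | top => exact ⟨0, fun _ => ⊤, rfl, rfl, fun j => j.elim0⟩
  | step H K hHK _ hN ih =>
    obtain ⟨t, f, hf0, hflast, hf⟩ := ih
    refine ⟨t + 1, Fin.cons H f, rfl, by simpa [← Fin.succ_last] using hflast, ?_⟩
    refine Fin.cases ?_ (fun j => ?_)
    · subst hf0
      exact ⟨hHK, hN⟩
    · rw [← Fin.succ_castSucc, Fin.cons_succ, Fin.cons_succ]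
      exact hf j

end Subgroup

section Sigma

variable {ι : Type*} {σ : ι → Set ℕ} {P X : Type*} [Group P] [Group X]

theorem IsSigmaPrimaryNat.of_dvd {n m : ℕ} (h : IsSigmaPrimaryNat σ n) (hmn : m ∣ n) :
    IsSigmaPrimaryNat σ m :=
  let ⟨i, hi⟩ := h
  ⟨i, fun p hp hpm => hi p hp (hpm.trans hmn)⟩

theorem IsSigmaPrimary.sigmaNilpotent (h : IsSigmaPrimary σ P) : SigmaNilpotent σ P := by
  refine ⟨1, fun _ => ⊤, fun _ => inferInstance, fun _ => ?_, fun t => ?_, iSup_const⟩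
  · rwa [IsSigmaPrimary, Subgroup.card_top]
  · simp [Subsingleton.elim _ t]

theorem SigmaPerfect.range_le (hP : SigmaPerfect σ P) (f : P →* X) {N : Subgroup X} [N.Normal]
    (hN : IsSigmaPrimaryNat σ N.index) : f.range ≤ N := by
  rw [MonoidHom.range_eq_map, Subgroup.map_le_iff_le_comap, top_le_iff]
  refine hP _ <| IsSigmaPrimary.sigmaNilpotent <| hN.of_dvd ?_
  rw [← Subgroup.index_eq_card, Subgroup.index_comap]
  exact Subgroup.relIndex_dvd_index_of_normal _ _

theorem SigmaPerfect.isSubnormal_range (hP : SigmaPerfect σ P) (f : P →* X) {H : Subgroup X}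
    (hfH : f.range ≤ H) (hf : (f.range.subgroupOf H).IsSubnormal)
    (hH : H.Normal ∨ IsSigmaPrimaryNat σ H.normalCore.index) : f.range.IsSubnormal := by
  rcases hH with hH | hH
  · exact hf.of_subgroupOf_of_le_normal hfH le_rfl
  · exact hf.of_subgroupOf_of_le_normal (hP.range_le f hH) H.normalCore_le

theorem SigmaSubnormal.isSubnormal {G : Type*} [Group G] {A : Subgroup G}
    (hA : SigmaSubnormal σ A) (hperf : SigmaPerfect σ A) : A.IsSubnormal := by
  obtain ⟨t, f, hf0, hflast, hf⟩ := hA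
  suffices h : ∀ i, A ≤ f i ∧ (A.subgroupOf (f i)).IsSubnormal by
    have hG := (h (Fin.last t)).2
    rw [hflast] at hG
    exact hG.trans le_top .top
  intro i
  induction i using Fin.induction with
  | zero =>
    subst hf0
    simp [Subgroup.subgroupOf_self]
  | succ j ih =>
    obtain ⟨hAj, hsn⟩ := ih
    obtain ⟨hle, hstep⟩ := hf j
    have hAK := hAj.trans hle
    refine ⟨hAK, ?_⟩
    rw [← Subgroup.inclusion_range hAK]
    refine hperf.isSubnormal_range _ ?_ ?_ hstep <;> rw [Subgroup.inclusion_range]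
    · exact Subgroup.subgroupOf_mono _ hAj
    · rw [Subgroup.subgroupOf_subgroupOf_eq_comap hle]
      exact hsn.comap _

end Sigma

theorem sigmaSubnormal_subnormal_of_sigmaPerfect_general {ι : Type*} (σ : ι → Set ℕ)
    (G : Type*) [Group G]
    (A : Subgroup G) (hA : SigmaSubnormal σ A)
    (hperf : ∀ (N : Subgroup ↥A) [N.Normal], SigmaNilpotent σ (↥A ⧸ N) → N = ⊤) :
    IsSubnormalIn A :=
  (hA.isSubnormal hperf).isSubnormalIn

/-- If `A` is a `σ`-subnormal subgroup of a finite group `G` and `A` is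
`σ`-perfect (i.e. `A` has no proper normal subgroup with `σ`-nilpotent quotient, so
`A^{𝔑_σ} = A`), then `A` is subnormal in `G`. -/
theorem sigmaSubnormal_subnormal_of_sigmaPerfect {ι : Type*} (σ : ι → Set ℕ)
    (hσ : IsPrimePartition σ) (G : Type*) [Group G] [Finite G]
    (A : Subgroup G) (hA : SigmaSubnormal σ A)
    (hperf : ∀ (N : Subgroup ↥A) [N.Normal], SigmaNilpotent σ (↥A ⧸ N) → N = ⊤) :
    IsSubnormalIn A :=
  sigmaSubnormal_subnormal_of_sigmaPerfect_general σ G A hA hperf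
end

section
/- If a finite σ-soluble group G has three Π-closed subgroups A, B, C whose indices |G:A|, |G:B|, |G:C| are pairwise σ-coprime, then G is Π-closed. -/
open Pointwise

/-!
Induction on `|G|`. Let `N` be a minimal normal subgroup of `G`; by `σ`-solubility it is a
`σ_i`-group, and by induction `G/N` has a normal Hall `Π`-subgroup `K/N`. If `σ_i ∈ Π`, then `K`
is a normal Hall `Π`-subgroup of `G`. Otherwise `N` is a `Π'`-group, and pairwise `σ`-coprimality
of the indices leaves two of them, say `|G:A|` and `|G:B|`, coprime to `|N|`, so that `N ≤ A ∩ B`.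
For `X ∈ {A, B}` the normal subgroups `O_Π(X)` and `N` of `X` have coprime orders and so commute;
hence every prime of `Π` dividing `|K : C_K(N)|` divides `|G:X|`, and `|K : C_K(N)|` is a
`Π'`-number. Finally `N ∩ C_K(N)` is a central Hall `Π'`-subgroup of `C_K(N)`, so by
Schur–Zassenhaus `C_K(N)` has a complement `H = {x ∈ C_K(N) | x ^ m = 1}`,
`m = |C_K(N) : N ∩ C_K(N)|`. Being defined by this equation inside a normal subgroup, `H` is normal
in `G`, and it is a Hall `Π`-subgroup of `G`.
-/

section

open Subgroup

variable {G : Type*} [Group G]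

namespace Subgroup

theorem card_mul_relIndex {H K : Subgroup G} (h : H ≤ K) :
    Nat.card H * H.relIndex K = Nat.card K := by
  rw [← Nat.card_congr (subgroupOfEquivOfLe h).toEquiv]
  exact card_mul_index (H.subgroupOf K)

theorem pow_natCard_eq_one {H : Subgroup G} {x : G} (hx : x ∈ H) : x ^ Nat.card H = 1 :=
  congrArg Subtype.val (pow_card_eq_one' (x := (⟨x, hx⟩ : H)))

theorem exists_isComplement'_mem_iff_pow_index_eq_one {Z : Subgroup G} (hZ : Z ≤ center G)
    (hcop : (Nat.card Z).Coprime Z.index) :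
    ∃ H : Subgroup G, IsComplement' Z H ∧ ∀ x, x ∈ H ↔ x ^ Z.index = 1 := by
  have : Z.Normal := ⟨fun n hn g => by rwa [mem_center_iff.mp (hZ hn) g, mul_inv_cancel_right]⟩
  obtain ⟨H, hH⟩ := exists_right_complement'_of_coprime hcop
  rw [hH.symm.index_eq_card]
  refine ⟨H, hH, fun x => ⟨pow_natCard_eq_one, fun hx => ?_⟩⟩
  obtain ⟨⟨⟨z, hz⟩, ⟨h, hh⟩⟩, rfl, -⟩ := hH.existsUnique x
  have hzh : Commute z h := (mem_center_iff.mp (hZ hz) h).symm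
  rw [hzh.mul_pow, pow_natCard_eq_one hh, mul_one] at hx
  have hz1 : z = 1 := (pow_eq_one_iff_of_coprime (hH.symm.index_eq_card ▸ hcop)).mp
    ⟨pow_natCard_eq_one hz, hx⟩
  simpa [hz1] using hh

end Subgroup

/-- `IsPiNumber πᶜ n` says that `n` is a `π'`-number; in particular `PiClosed π G` unfolds to
`IsPiNumber πᶜ (OPi π G).index`. -/
def IsPiNumber (π : Set ℕ) (n : ℕ) : Prop :=
  ∀ p : ℕ, p.Prime → p ∣ n → p ∈ π

namespace IsPiNumber

variable {π π' : Set ℕ} {a b : ℕ}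

theorem of_dvd (h : IsPiNumber π b) (hab : a ∣ b) : IsPiNumber π a :=
  fun p hp hpa => h p hp (hpa.trans hab)

theorem mul (ha : IsPiNumber π a) (hb : IsPiNumber π b) : IsPiNumber π (a * b) :=
  fun p hp hpab => (hp.dvd_mul.mp hpab).elim (ha p hp) (hb p hp)

theorem mono (h : IsPiNumber π a) (hπ : π ⊆ π') : IsPiNumber π' a :=
  fun p hp hpa => hπ (h p hp hpa)

theorem coprime (ha : IsPiNumber π a) (hb : IsPiNumber πᶜ b) : a.Coprime b :=
  Nat.coprime_of_dvd fun p hp hpa hpb => hb p hp hpb (ha p hp hpa)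

end IsPiNumber

theorem isPiNumber_one (π : Set ℕ) : IsPiNumber π 1 :=
  fun _ hp h => absurd (Nat.dvd_one.mp h) hp.ne_one

structure IsNormalHallSubgroup (π : Set ℕ) (H : Subgroup G) : Prop where
  normal : H.Normal
  card : IsPiNumber π (Nat.card H)
  index : IsPiNumber πᶜ H.index

theorem le_oPi {π : Set ℕ} {H : Subgroup G} (hH : H.Normal) (hπ : IsPiNumber π (Nat.card H)) :
    H ≤ OPi π G :=
  le_iSup₂_of_le (f := fun (N : Subgroup G) (_ : N.Normal ∧ IsPiNumber π (Nat.card N)) => N)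
    H ⟨hH, hπ⟩ le_rfl

theorem oPi_normal_and_isPiNumber [Finite G] (π : Set ℕ) :
    (OPi π G).Normal ∧ IsPiNumber π (Nat.card (OPi π G)) := by
  refine SupClosed.biSup_mem (f := id)
    (s := {N : Subgroup G | N.Normal ∧ IsPiNumber π (Nat.card N)}) ?_ (Set.toFinite _)
    ⟨normal_bot, by simpa using isPiNumber_one π⟩ fun N hN => hN
  rintro H ⟨hHn, hH⟩ K ⟨hKn, hK⟩
  refine ⟨Subgroup.sup_normal H K, ?_⟩
  rw [← Subgroup.card_mul_relIndex (le_sup_right : K ≤ H ⊔ K), Subgroup.relIndex_sup_right]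
  exact hK.mul (hH.of_dvd (Subgroup.relIndex_dvd_card K H))

theorem IsNormalHallSubgroup.piClosed {π : Set ℕ} {H : Subgroup G}
    (hH : IsNormalHallSubgroup π H) : PiClosed π G :=
  hH.index.of_dvd (Subgroup.index_dvd_of_le (le_oPi hH.normal hH.card))

theorem PiClosed.of_surjective [Finite G] {G' : Type*} [Group G'] {π : Set ℕ} {f : G →* G'}
    (hf : Function.Surjective f) (h : PiClosed π G) : PiClosed π G' := by
  have : Finite G' := Finite.of_surjective f hf
  obtain ⟨hn, hπ⟩ := oPi_normal_and_isPiNumber (G := G) π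
  have hle : (OPi π G).map f ≤ OPi π G' :=
    le_oPi (hn.map f hf) (hπ.of_dvd (Subgroup.card_map_dvd _ f))
  exact IsPiNumber.of_dvd h ((Subgroup.index_dvd_of_le hle).trans (Subgroup.index_map_dvd _ hf))

namespace Subgroup

variable [Finite G]

theorem relIndex_dvd_index_of_normal_right (H K : Subgroup G) [K.Normal] :
    H.relIndex K ∣ H.index := by
  obtain ⟨c, hc⟩ := relIndex_dvd_index_of_normal K H
  have h₁ : H.relIndex K * K.index = (H ⊓ K).index := by
    simpa using relIndex_inf_mul_relIndex H K ⊤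
  have h₂ : K.relIndex H * H.index = (H ⊓ K).index := by
    rw [← inf_relIndex_left, relIndex_mul_index inf_le_left]
  have hne : K.relIndex H ≠ 0 := index_ne_zero_of_finite
  refine ⟨c, mul_left_cancel₀ hne ?_⟩
  rw [h₂, ← h₁, hc]
  ring

theorem le_of_coprime_card_index {N X : Subgroup G} [N.Normal]
    (h : (Nat.card N).Coprime X.index) : N ≤ X :=
  relIndex_eq_one.mp <| Nat.eq_one_of_dvd_coprimes h (relIndex_dvd_card X N)
    (relIndex_dvd_index_of_normal_right X N)

theorem map_oPi_le_centralizer {π : Set ℕ} {N X : Subgroup G} [N.Normal] (hNX : N ≤ X)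
    (hN : IsPiNumber πᶜ (Nat.card N)) : (OPi π X).map X.subtype ≤ centralizer (N : Set G) := by
  obtain ⟨hOn, hO⟩ := oPi_normal_and_isPiNumber (G := X) π
  have hcard : Nat.card (N.subgroupOf X) = Nat.card N :=
    Nat.card_congr (subgroupOfEquivOfLe hNX).toEquiv
  have hcomm := commute_of_normal_of_disjoint _ _ hOn inferInstance
    (disjoint_of_coprime_natCard (hO.coprime (hcard ▸ hN)))
  rintro _ ⟨x, hx, rfl⟩
  exact mem_centralizer_iff.mpr fun n hn => congrArg Subtype.val (hcomm x ⟨n, hNX hn⟩ hx hn).symm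

theorem relIndex_centralizer_dvd {π : Set ℕ} {N X K : Subgroup G} [N.Normal] [K.Normal]
    (hNX : N ≤ X) (hN : IsPiNumber πᶜ (Nat.card N)) :
    (centralizer (N : Set G)).relIndex K ∣ (OPi π X).index * X.index := by
  have := (oPi_normal_and_isPiNumber (G := X) π).1
  set O := (OPi π X).map X.subtype
  have hOX : O.relIndex (X ⊓ K) = (OPi π X).relIndex (K.subgroupOf X) := by
    rw [← relIndex_map_map_of_injective _ _ X.subtype_injective, subgroupOf_map_subtype,
      inf_comm]
  calc (centralizer (N : Set G)).relIndex K ∣ O.relIndex K :=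
        relIndex_dvd_of_le_left K (map_oPi_le_centralizer hNX hN)
    _ = O.relIndex (X ⊓ K) * X.relIndex K := by
        rw [relIndex_inf_mul_relIndex, inf_of_le_left (map_subtype_le _)]
    _ ∣ (OPi π X).index * X.index :=
        mul_dvd_mul (hOX ▸ relIndex_dvd_index_of_normal _ _)
          (relIndex_dvd_index_of_normal_right X K)

end Subgroup

theorem exists_isNormalHallSubgroup_of_isPiNumber_relIndex_centralizer {π : Set ℕ}
    {N K : Subgroup G} [N.Normal] [K.Normal] (hNK : N ≤ K)
    (hN : IsPiNumber πᶜ (Nat.card N)) (hKN : IsPiNumber π (N.relIndex K))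
    (hK : IsPiNumber πᶜ K.index) (hC : IsPiNumber πᶜ ((centralizer (N : Set G)).relIndex K)) :
    ∃ H : Subgroup G, IsNormalHallSubgroup π H := by
  set C := centralizer (N : Set G) ⊓ K
  have hCn : C.Normal := normal_inf_normal _ _
  set Z := N.subgroupOf C
  have hZ : Z ≤ center C := fun z hz => mem_center_iff.mpr fun c =>
    Subtype.ext (mem_centralizer_iff.mp (mem_inf.mp c.2).1 z hz).symm
  have hZcard : Nat.card Z ∣ Nat.card N := by
    rw [← card_map_of_injective C.subtype_injective, subgroupOf_map_subtype]
    exact card_dvd_of_le inf_le_left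
  have hZindex : Z.index ∣ N.relIndex K := by
    rw [show Z.index = N.relIndex (C ⊔ N) from (relIndex_sup_right C N).symm]
    exact Dvd.intro _ <| relIndex_mul_relIndex _ _ _ le_sup_right (sup_le inf_le_right hNK)
  obtain ⟨H, hH, hmem⟩ := exists_isComplement'_mem_iff_pow_index_eq_one hZ
    ((hKN.of_dvd hZindex).coprime (hN.of_dvd hZcard)).symm
  refine ⟨H.map C.subtype, ⟨⟨fun _ hx g => ?_⟩, ?_, ?_⟩⟩
  · obtain ⟨y, hy, rfl⟩ := hx
    refine ⟨⟨g * y * g⁻¹, hCn.conj_mem y y.2 g⟩, (hmem _).mpr (Subtype.ext ?_), rfl⟩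
    simpa [conj_pow] using congrArg Subtype.val ((hmem y).mp hy)
  · rw [card_map_of_injective C.subtype_injective, ← hH.symm.index_eq_card]
    exact hKN.of_dvd hZindex
  · rw [index_map_subtype, hH.index_eq_card, ← relIndex_mul_index (inf_le_right : C ≤ K),
      inf_relIndex_right]
    exact (hN.of_dvd hZcard).mul (hC.mul hK)

theorem dvd_index_of_dvd_relIndex_centralizer [Finite G] {π : Set ℕ} {N X K : Subgroup G}
    [N.Normal] [K.Normal] (hX : PiClosed π X) (hNX : N ≤ X) (hN : IsPiNumber πᶜ (Nat.card N))
    {p : ℕ} (hp : p.Prime) (hpπ : p ∈ π) (hpC : p ∣ (centralizer (N : Set G)).relIndex K) :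
    p ∣ X.index :=
  (hp.dvd_mul.mp (hpC.trans (relIndex_centralizer_dvd hNX hN))).resolve_left
    fun h => hX p hp h hpπ

theorem exists_isNormalHallSubgroup_of_piClosed_of_coprime_index [Finite G] {π : Set ℕ}
    {N K X Y : Subgroup G} [N.Normal] [K.Normal] (hNK : N ≤ K)
    (hN : IsPiNumber πᶜ (Nat.card N)) (hKN : IsPiNumber π (N.relIndex K))
    (hK : IsPiNumber πᶜ K.index) (hX : PiClosed π X) (hY : PiClosed π Y)
    (hNX : N ≤ X) (hNY : N ≤ Y) (hXY : X.index.Coprime Y.index) :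
    ∃ H : Subgroup G, IsNormalHallSubgroup π H :=
  exists_isNormalHallSubgroup_of_isPiNumber_relIndex_centralizer hNK hN hKN hK
    fun _ hp hpC hpπ => hp.ne_one <| Nat.eq_one_of_dvd_coprimes hXY
      (dvd_index_of_dvd_relIndex_centralizer hX hNX hN hp hpπ hpC)
      (dvd_index_of_dvd_relIndex_centralizer hY hNY hN hp hpπ hpC)

theorem IsNormalHallSubgroup.exists_lift {π : Set ℕ} {N : Subgroup G} [N.Normal]
    {H : Subgroup (G ⧸ N)} (hH : IsNormalHallSubgroup π H) :
    ∃ K : Subgroup G, K.Normal ∧ N ≤ K ∧ IsPiNumber π (N.relIndex K) ∧ IsPiNumber πᶜ K.index := by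
  set φ := QuotientGroup.mk' N
  have hφ : Function.Surjective φ := QuotientGroup.mk'_surjective N
  refine ⟨H.comap φ, hH.normal.comap φ,
    (QuotientGroup.ker_mk' N).symm.trans_le (φ.ker_le_comap H), ?_, ?_⟩
  · have h := relIndex_ker (H.comap φ) φ
    rw [QuotientGroup.ker_mk', map_comap_eq_self_of_surjective hφ] at h
    exact h ▸ hH.card
  · rw [index_comap_of_surjective H hφ]
    exact hH.index

section Sigma

variable {ι : Type*} {σ : ι → Set ℕ}

namespace SigmaCoprime

variable {a b : ℕ}

theorem of_dvd {a' b' : ℕ} (h : SigmaCoprime σ a b) (ha : a' ∣ a) (hb : b' ∣ b) :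
    SigmaCoprime σ a' b' :=
  fun i p q hp hq hpa hqb => h i p q hp hq (hpa.trans ha) (hqb.trans hb)

theorem coprime (hσ : IsPrimePartition σ) (h : SigmaCoprime σ a b) : a.Coprime b :=
  Nat.coprime_of_dvd fun p hp hpa hpb =>
    let ⟨i, hi⟩ := hσ.2.2.2 p hp
    h i p p hp hp hpa hpb hi hi

theorem coprime_or_coprime {n : ℕ} {i : ι} (h : SigmaCoprime σ a b) (hn : IsPiNumber (σ i) n) :
    n.Coprime a ∨ n.Coprime b := by
  by_contra! ⟨ha, hb⟩
  obtain ⟨p, hp, hpn, hpa⟩ := Nat.Prime.not_coprime_iff_dvd.mp ha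
  obtain ⟨q, hq, hqn, hqb⟩ := Nat.Prime.not_coprime_iff_dvd.mp hb
  exact h i p q hp hq hpa hqb (hn p hp hpn) (hn q hq hqn)

theorem coprime_and_coprime_of_three {n c : ℕ} {i : ι} (hn : IsPiNumber (σ i) n) (hab : SigmaCoprime σ a b)
    (hac : SigmaCoprime σ a c) (hbc : SigmaCoprime σ b c) :
    (n.Coprime a ∧ n.Coprime b) ∨ (n.Coprime a ∧ n.Coprime c) ∨ (n.Coprime b ∧ n.Coprime c) := by
  rcases hab.coprime_or_coprime hn with ha | hb
  · exact (hbc.coprime_or_coprime hn).imp (⟨ha, ·⟩) (Or.inl ⟨ha, ·⟩)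
  · rcases hac.coprime_or_coprime hn with ha | hc
    · exact Or.inl ⟨ha, hb⟩
    · exact Or.inr (Or.inr ⟨hb, hc⟩)

end SigmaCoprime

theorem subset_compl_piPrimes (hσ : IsPrimePartition σ) {S : Set ι} {i : ι} (hi : i ∉ S) :
    σ i ⊆ (PiPrimes σ S)ᶜ := fun p hpi hpS => by
  obtain ⟨j, hj, hpj⟩ := Set.mem_iUnion₂.mp hpS
  exact Set.disjoint_left.mp (hσ.2.2.1 i j fun h => hi (h ▸ hj)) hpi hpj

theorem SigmaSoluble.quotient (hG : SigmaSoluble σ G) (N : Subgroup G) [N.Normal] :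
    SigmaSoluble σ (G ⧸ N) := by
  rintro K H ⟨hKn, hHn, hKH, hmax⟩
  set φ := QuotientGroup.mk' N
  have hφ : Function.Surjective φ := QuotientGroup.mk'_surjective N
  have hrel : (K.comap φ).relIndex (H.comap φ) = K.relIndex H := by
    rw [relIndex_comap, map_comap_eq_self_of_surjective hφ]
  refine hrel ▸ hG _ _ ⟨hKn.comap φ, hHn.comap φ, (comap_lt_comap_of_surjective hφ).mpr hKH, ?_⟩
  intro L hLn hKL hLH
  have hL : (L.map φ).comap φ = L :=
    comap_map_eq_self (φ.comap_bot ▸ (comap_mono bot_le).trans hKL)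
  rcases hmax (L.map φ) (hLn.map φ hφ)
    ((map_comap_eq_self_of_surjective hφ K).symm.trans_le (map_mono hKL))
    ((map_mono hLH).trans_eq (map_comap_eq_self_of_surjective hφ H)) with h | h
  · exact Or.inl (hL ▸ h ▸ rfl)
  · exact Or.inr (hL ▸ h ▸ rfl)

theorem exists_isChiefFactor_bot [Finite G] [Nontrivial G] :
    ∃ N : Subgroup G, IsChiefFactor G ⊥ N := by
  obtain ⟨N, ⟨hNn, hN⟩, hmin⟩ := exists_minimal_of_wellFoundedLT
    (fun N : Subgroup G => N.Normal ∧ N ≠ ⊥) ⟨⊤, inferInstance, top_ne_bot⟩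
  exact ⟨N, Subgroup.normal_bot, hNn, bot_lt_iff_ne_bot.mpr hN, fun L hLn _ hLN =>
    (eq_or_ne L ⊥).imp_right fun hL => le_antisymm hLN (hmin ⟨hLn, hL⟩ hLN)⟩

theorem exists_isNormalHallSubgroup_of_three_subgroups (hσ : IsPrimePartition σ) {S : Set ι}
    [Finite G] (hG : SigmaSoluble σ G) {A B C : Subgroup G}
    (hA : PiClosed (PiPrimes σ S) A) (hB : PiClosed (PiPrimes σ S) B)
    (hC : PiClosed (PiPrimes σ S) C) (hAB : SigmaCoprime σ A.index B.index)
    (hAC : SigmaCoprime σ A.index C.index) (hBC : SigmaCoprime σ B.index C.index) :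
    ∃ H : Subgroup G, IsNormalHallSubgroup (PiPrimes σ S) H := by
  induction hn : Nat.card G using Nat.strong_induction_on generalizing G with
  | _ n ih =>
  set π := PiPrimes σ S
  rcases subsingleton_or_nontrivial G with _ | _
  · exact ⟨⊤, inferInstance, by simpa using isPiNumber_one π, by simpa using isPiNumber_one πᶜ⟩
  obtain ⟨N, hN⟩ := exists_isChiefFactor_bot (G := G)
  have := hN.2.1
  obtain ⟨i, hi : IsPiNumber (σ i) (Nat.card N)⟩ := relIndex_bot_left N ▸ hG ⊥ N hN
  set φ := QuotientGroup.mk' N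
  have hlt : Nat.card (G ⧸ N) < n := by
    rw [← hn, N.card_eq_card_quotient_mul_card_subgroup]
    exact lt_mul_of_one_lt_right Nat.card_pos (N.one_lt_card_iff_ne_bot.mpr hN.2.2.1.ne')
  have hmap : ∀ {X : Subgroup G}, PiClosed π X → PiClosed π (X.map φ) := fun hX =>
    hX.of_surjective (φ.subgroupMap_surjective _)
  have hindex (X : Subgroup G) : (X.map φ).index ∣ X.index :=
    X.index_map_dvd (QuotientGroup.mk'_surjective N)
  obtain ⟨H, hH⟩ := ih _ hlt (hG.quotient N) (hmap hA) (hmap hB) (hmap hC)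
    (hAB.of_dvd (hindex A) (hindex B)) (hAC.of_dvd (hindex A) (hindex C))
    (hBC.of_dvd (hindex B) (hindex C)) rfl
  obtain ⟨K, hKn, hNK, hKN, hK⟩ := hH.exists_lift
  by_cases hiS : i ∈ S
  · refine ⟨K, hKn, ?_, hK⟩
    rw [← card_mul_relIndex hNK]
    exact (hi.mono (Set.subset_biUnion_of_mem hiS)).mul hKN
  have hN : IsPiNumber πᶜ (Nat.card N) := hi.mono (subset_compl_piPrimes hσ hiS)
  have of_two {X Y : Subgroup G} (hX : PiClosed π X) (hY : PiClosed π Y)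
      (hXY : SigmaCoprime σ X.index Y.index)
      (hN' : (Nat.card N).Coprime X.index ∧ (Nat.card N).Coprime Y.index) :
      ∃ H : Subgroup G, IsNormalHallSubgroup π H :=
    exists_isNormalHallSubgroup_of_piClosed_of_coprime_index hNK hN hKN hK hX hY
      (le_of_coprime_card_index hN'.1) (le_of_coprime_card_index hN'.2) (hXY.coprime hσ)
  rcases SigmaCoprime.coprime_and_coprime_of_three hi hAB hAC hBC with h | h | h
  · exact of_two hA hB hAB h
  · exact of_two hA hC hAC h
  · exact of_two hB hC hBC h

end Sigma

end

theorem piClosed_of_three_subgroups_general {ι : Type*} (σ : ι → Set ℕ)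
    (hσ : IsPrimePartition σ) (G : Type*) [Group G] [Finite G]
    (hsol : SigmaSoluble σ G) (S : Set ι)
    (A B C : Subgroup G)
    (hA : PiClosed (PiPrimes σ S) ↥A) (hB : PiClosed (PiPrimes σ S) ↥B)
    (hC : PiClosed (PiPrimes σ S) ↥C)
    (hAB : SigmaCoprime σ A.index B.index)
    (hAC : SigmaCoprime σ A.index C.index)
    (hBC : SigmaCoprime σ B.index C.index) :
    PiClosed (PiPrimes σ S) G := by
  obtain ⟨H, hH⟩ := exists_isNormalHallSubgroup_of_three_subgroups hσ hsol hA hB hC hAB hAC hBC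
  exact hH.piClosed

/-- If a finite `σ`-soluble group `G` has three `Π`-closed subgroups
`A`, `B`, `C` whose indices are pairwise `σ`-coprime, then `G` is `Π`-closed. -/
theorem piClosed_of_three_subgroups {ι : Type*} (σ : ι → Set ℕ)
    (hσ : IsPrimePartition σ) (G : Type*) [Group G] [Finite G]
    (hsol : SigmaSoluble σ G) (S : Set ι) (hS : S.Nonempty)
    (A B C : Subgroup G)
    (hA : PiClosed (PiPrimes σ S) ↥A) (hB : PiClosed (PiPrimes σ S) ↥B)
    (hC : PiClosed (PiPrimes σ S) ↥C)
    (hAB : SigmaCoprime σ A.index B.index)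
    (hAC : SigmaCoprime σ A.index C.index)
    (hBC : SigmaCoprime σ B.index C.index) :
    PiClosed (PiPrimes σ S) G :=
  piClosed_of_three_subgroups_general σ hσ G hsol S A B C hA hB hC hAB hAC hBC
end
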